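/- arXiv:2602.07799 — 2 statements merged into one kernel-verified Lean document; each statement's English description precedes it below -/
import Mathlib

section
/- Let π^fair and π^plain be the Gibbs policies obtained from rewards r_fair and r_plain with the same β > 0 and the same reference π_ref. If ‖r_fair − r_plain‖_∞ ≤ ε, then the total variation distance between π^fair and π^plain is at most (e^{2ε/β} − 1)/2, and consequently for any f : A → [0,1], |E_{π^fair}[f] − E_{π^plain}[f]| ≤ e^{2ε/β} − 1. -/
/-- π is a probability distribution on the finite set A. -/
def IsProb {A : Type*} [Fintype A] (π : A → ℝ) : Prop :=
  (∀ a, 0 ≤ π a) ∧ ∑ a, π a = 1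

/-- Expectation of f under π. -/
def Exp {A : Type*} [Fintype A] (π f : A → ℝ) : ℝ := ∑ a, π a * f a

/-- Kullback–Leibler divergence KL(π‖ρ) on a finite set. -/
noncomputable def KL {A : Type*} [Fintype A] (π ρ : A → ℝ) : ℝ :=
  ∑ a, π a * Real.log (π a / ρ a)

/-- KL-regularized objective J_β(π) = E_π[r] − β·KL(π‖π_ref). -/
noncomputable def J {A : Type*} [Fintype A] (β : ℝ) (r πref π : A → ℝ) : ℝ :=
  Exp π r - β * KL π πref


/-- Total variation distance on a finite set. -/
noncomputable def TV {A : Type*} [Fintype A] (μ ν : A → ℝ) : ℝ :=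
  (∑ a, |μ a - ν a|) / 2

theorem stmt5 {A : Type*} [Fintype A] [Nonempty A] (πref rfair rplain : A → ℝ)
    (β ε : ℝ) (hβ : 0 < β) (hε : 0 ≤ ε)
    (hπref : IsProb πref) (hpos : ∀ a, 0 < πref a)
    (hclose : ∀ a, |rfair a - rplain a| ≤ ε)
    (πfair πplain : A → ℝ)
    (hfair : ∀ a, πfair a = πref a * Real.exp (rfair a / β) /
      ∑ a', πref a' * Real.exp (rfair a' / β))
    (hplain : ∀ a, πplain a = πref a * Real.exp (rplain a / β) /
      ∑ a', πref a' * Real.exp (rplain a' / β)) :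
    TV πfair πplain ≤ (Real.exp (2 * ε / β) - 1) / 2 ∧
    ∀ f : A → ℝ, (∀ a, 0 ≤ f a ∧ f a ≤ 1) →
      |Exp πfair f - Exp πplain f| ≤ Real.exp (2 * ε / β) - 1 := by
  set c := Real.exp (2 * ε / β) with hc
  have hc1 : 1 ≤ c := by
    rw [hc]
    have : (0:ℝ) ≤ 2 * ε / β := div_nonneg (by linarith) hβ.le
    simpa using Real.one_le_exp this
  -- positivity of partition functions
  have hZpos : ∀ r : A → ℝ, 0 < ∑ a', πref a' * Real.exp (r a' / β) := by
    intro r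
    exact Finset.sum_pos (fun a _ => mul_pos (hpos a) (Real.exp_pos _)) Finset.univ_nonempty
  -- key one-sided ratio bound
  have key : ∀ r1 r2 : A → ℝ, (∀ a, r1 a - r2 a ≤ ε) → (∀ a, r2 a - r1 a ≤ ε) →
      ∀ a, πref a * Real.exp (r1 a / β) / (∑ a', πref a' * Real.exp (r1 a' / β)) ≤
        c * (πref a * Real.exp (r2 a / β) / (∑ a', πref a' * Real.exp (r2 a' / β))) := by
    intro r1 r2 h12 h21 a
    have hZ1 := hZpos r1
    have hZ2 := hZpos r2
    have hZle : (∑ a', πref a' * Real.exp (r2 a' / β)) ≤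
        Real.exp (ε / β) * ∑ a', πref a' * Real.exp (r1 a' / β) := by
      rw [Finset.mul_sum]
      apply Finset.sum_le_sum
      intro i _
      have : Real.exp (r2 i / β) ≤ Real.exp (ε / β) * Real.exp (r1 i / β) := by
        rw [← Real.exp_add]
        apply Real.exp_le_exp.mpr
        rw [← add_div]
        gcongr
        linarith [h21 i]
      calc πref i * Real.exp (r2 i / β) ≤ πref i * (Real.exp (ε / β) * Real.exp (r1 i / β)) :=
            mul_le_mul_of_nonneg_left this (hpos i).le
        _ = Real.exp (ε / β) * (πref i * Real.exp (r1 i / β)) := by ring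
    have he : Real.exp (r1 a / β) ≤ Real.exp (ε / β) * Real.exp (r2 a / β) := by
      rw [← Real.exp_add]
      apply Real.exp_le_exp.mpr
      rw [← add_div]
      gcongr
      linarith [h12 a]
    rw [mul_div_assoc', div_le_div_iff₀ hZ1 hZ2]
    calc πref a * Real.exp (r1 a / β) * ∑ a', πref a' * Real.exp (r2 a' / β)
        ≤ (πref a * (Real.exp (ε / β) * Real.exp (r2 a / β))) *
          (Real.exp (ε / β) * ∑ a', πref a' * Real.exp (r1 a' / β)) := by
          apply mul_le_mul _ hZle (hZpos r2).le (mul_nonneg (hpos a).le (by positivity))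
          exact mul_le_mul_of_nonneg_left he (hpos a).le
      _ = c * (πref a * Real.exp (r2 a / β)) * ∑ a', πref a' * Real.exp (r1 a' / β) := by
          rw [hc]
          rw [show 2 * ε / β = ε / β + ε / β by ring, Real.exp_add]
          ring
  have h12 : ∀ a, rfair a - rplain a ≤ ε := fun a => (abs_le.mp (hclose a)).2
  have h21 : ∀ a, rplain a - rfair a ≤ ε := fun a => by
    have := (abs_le.mp (hclose a)).1; linarith
  have kfp : ∀ a, πfair a ≤ c * πplain a := fun a => by
    rw [hfair, hplain]; exact key rfair rplain h12 h21 a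
  have kpf : ∀ a, πplain a ≤ c * πfair a := fun a => by
    rw [hfair, hplain]; exact key rplain rfair h21 h12 a
  have hfnn : ∀ a, 0 ≤ πfair a := fun a => by
    rw [hfair]; exact div_nonneg (mul_nonneg (hpos a).le (Real.exp_pos _).le) (hZpos rfair).le
  have hpnn : ∀ a, 0 ≤ πplain a := fun a => by
    rw [hplain]; exact div_nonneg (mul_nonneg (hpos a).le (Real.exp_pos _).le) (hZpos rplain).le
  have hpsum : ∑ a, πplain a = 1 := by
    have hZ := hZpos rplain
    rw [Finset.sum_congr rfl (fun a _ => hplain a), ← Finset.sum_div, div_self hZ.ne']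
  have habs : ∀ a, |πfair a - πplain a| ≤ (c - 1) * πplain a := by
    intro a
    rcases le_total (πplain a) (πfair a) with h | h
    · rw [abs_of_nonneg (by linarith)]
      have := kfp a; nlinarith
    · rw [abs_of_nonpos (by linarith)]
      have := kpf a
      have := hfnn a
      nlinarith
  have hsum : ∑ a, |πfair a - πplain a| ≤ c - 1 := by
    calc ∑ a, |πfair a - πplain a| ≤ ∑ a, (c - 1) * πplain a :=
          Finset.sum_le_sum (fun a _ => habs a)
      _ = (c - 1) * ∑ a, πplain a := by rw [Finset.mul_sum]
      _ = c - 1 := by rw [hpsum, mul_one]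
  constructor
  · unfold TV
    linarith
  · intro f hf
    unfold Exp
    rw [← Finset.sum_sub_distrib]
    calc |∑ a, (πfair a * f a - πplain a * f a)| ≤ ∑ a, |πfair a * f a - πplain a * f a| :=
          Finset.abs_sum_le_sum_abs _ _
      _ ≤ ∑ a, |πfair a - πplain a| := by
          apply Finset.sum_le_sum
          intro a _
          rw [show πfair a * f a - πplain a * f a = (πfair a - πplain a) * f a by ring,
            abs_mul]
          have h1 : |f a| ≤ 1 := by
            rw [abs_of_nonneg (hf a).1]; exact (hf a).2
          nlinarith [abs_nonneg (πfair a - πplain a)]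
      _ ≤ c - 1 := hsum
end

section
/- Fix β > 0 and π_ref. For two rewards r, r' : A → ℝ with corresponding Gibbs policies π, π', and any f : A → ℝ with values in [0,1], defining Δ(π) = |E_π[f] − c| for a fixed constant c, we have Δ(π') ≤ Δ(π) + (e^{2‖r−r'‖_∞/β} − 1). In particular if r' is ε_T-close in sup norm to a reward whose induced policy has fairness violation no larger than that of r's policy, the fairness violation of π' exceeds that of π by at most e^{2ε_T/β} − 1. -/
lemma key_exp_diff {A : Type*} [Fintype A] (π π' f : A → ℝ) (C : ℝ) (hC : 1 ≤ C)
    (hπ : ∀ a, 0 ≤ π a) (hsum : ∑ a, π a = 1)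
    (hratio : ∀ a, π' a ≤ C * π a) (hf : ∀ a, 0 ≤ f a ∧ f a ≤ 1) :
    Exp π' f - Exp π f ≤ C - 1 := by
  have h : ∀ a ∈ Finset.univ, π' a * f a - π a * f a ≤ (C - 1) * π a := by
    intro a _
    nlinarith [mul_nonneg (sub_nonneg.mpr (hratio a)) (hf a).1,
      mul_nonneg (hπ a) (sub_nonneg.mpr (hf a).2),
      mul_nonneg (sub_nonneg.mpr hC) (mul_nonneg (hπ a) (sub_nonneg.mpr (hf a).2))]
  have := Finset.sum_le_sum h
  simp only [Finset.sum_sub_distrib, ← Finset.mul_sum, hsum] at this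
  simpa [Exp] using this

lemma gibbs_ratio {A : Type*} [Fintype A] [Nonempty A] (πref r r' : A → ℝ)
    (β ε : ℝ) (hβ : 0 < β) (hε : 0 ≤ ε) (hpos : ∀ a, 0 < πref a)
    (hclose : ∀ a, r' a - r a ≤ ε ∧ r a - r' a ≤ ε) (a : A) :
    πref a * Real.exp (r' a / β) / (∑ a', πref a' * Real.exp (r' a' / β)) ≤
      Real.exp (2 * ε / β) *
        (πref a * Real.exp (r a / β) / (∑ a', πref a' * Real.exp (r a' / β))) := by
  set Z : ℝ := ∑ a', πref a' * Real.exp (r a' / β) with hZdef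
  set Z' : ℝ := ∑ a', πref a' * Real.exp (r' a' / β) with hZ'def
  have hZpos : 0 < Z := Finset.sum_pos (fun a' _ => mul_pos (hpos a') (Real.exp_pos _))
    Finset.univ_nonempty
  have hZ'pos : 0 < Z' := Finset.sum_pos (fun a' _ => mul_pos (hpos a') (Real.exp_pos _))
    Finset.univ_nonempty
  have h1 : Real.exp (r' a / β) ≤ Real.exp (ε / β) * Real.exp (r a / β) := by
    rw [← Real.exp_add]
    apply Real.exp_le_exp.mpr
    rw [← add_div]
    gcongr
    linarith [(hclose a).1]
  have h2 : Z ≤ Real.exp (ε / β) * Z' := by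
    rw [Finset.mul_sum]
    apply Finset.sum_le_sum
    intro a' _
    have : Real.exp (r a' / β) ≤ Real.exp (ε / β) * Real.exp (r' a' / β) := by
      rw [← Real.exp_add]
      apply Real.exp_le_exp.mpr
      rw [← add_div]
      gcongr
      linarith [(hclose a').2]
    nlinarith [(hpos a').le, Real.exp_pos (r a' / β)]
  rw [div_le_iff₀ hZ'pos]
  have h2e : 2 * ε / β = ε / β + ε / β := by ring
  have hexp : Real.exp (2 * ε / β) = Real.exp (ε / β) * Real.exp (ε / β) := by
    rw [h2e, Real.exp_add]
  have key : πref a * Real.exp (r' a / β) * Z ≤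
      Real.exp (ε / β) * Real.exp (ε / β) * (πref a * Real.exp (r a / β)) * Z' := by
    calc πref a * Real.exp (r' a / β) * Z
        ≤ (πref a * (Real.exp (ε / β) * Real.exp (r a / β))) * (Real.exp (ε / β) * Z') := by
          apply mul_le_mul
          · exact mul_le_mul_of_nonneg_left h1 (hpos a).le
          · exact h2
          · exact hZpos.le
          · exact mul_nonneg (hpos a).le (mul_nonneg (Real.exp_pos _).le (Real.exp_pos _).le)
      _ = Real.exp (ε / β) * Real.exp (ε / β) * (πref a * Real.exp (r a / β)) * Z' := by ring
  have : πref a * Real.exp (r' a / β) ≤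
      Real.exp (ε / β) * Real.exp (ε / β) * (πref a * Real.exp (r a / β)) * Z' / Z := by
    rw [le_div_iff₀ hZpos]; linarith
  calc πref a * Real.exp (r' a / β)
      ≤ Real.exp (ε / β) * Real.exp (ε / β) * (πref a * Real.exp (r a / β)) * Z' / Z := this
    _ = Real.exp (2 * ε / β) * (πref a * Real.exp (r a / β) / Z) * Z' := by
        rw [hexp]; ring

theorem stmt15 {A : Type*} [Fintype A] [Nonempty A] (πref r r' : A → ℝ)
    (β ε : ℝ) (hβ : 0 < β) (hε : 0 ≤ ε)
    (hπref : IsProb πref) (hpos : ∀ a, 0 < πref a)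
    (hclose : ∀ a, |r a - r' a| ≤ ε)
    (π π' : A → ℝ)
    (hπ : ∀ a, π a = πref a * Real.exp (r a / β) /
      ∑ a', πref a' * Real.exp (r a' / β))
    (hπ' : ∀ a, π' a = πref a * Real.exp (r' a / β) /
      ∑ a', πref a' * Real.exp (r' a' / β))
    (f : A → ℝ) (hf : ∀ a, 0 ≤ f a ∧ f a ≤ 1) (c : ℝ) :
    |Exp π' f - c| ≤ |Exp π f - c| + (Real.exp (2 * ε / β) - 1) := by
  have hcl : ∀ a, r' a - r a ≤ ε ∧ r a - r' a ≤ ε := by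
    intro a
    have := abs_le.mp (hclose a)
    constructor <;> linarith [this.1, this.2]
  have hcl' : ∀ a, r a - r' a ≤ ε ∧ r' a - r a ≤ ε := fun a => ⟨(hcl a).2, (hcl a).1⟩
  set Z : ℝ := ∑ a', πref a' * Real.exp (r a' / β) with hZdef
  set Z' : ℝ := ∑ a', πref a' * Real.exp (r' a' / β) with hZ'def
  have hZpos : 0 < Z := Finset.sum_pos (fun a' _ => mul_pos (hpos a') (Real.exp_pos _))
    Finset.univ_nonempty
  have hZ'pos : 0 < Z' := Finset.sum_pos (fun a' _ => mul_pos (hpos a') (Real.exp_pos _))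
    Finset.univ_nonempty
  have hπnn : ∀ a, 0 ≤ π a := fun a => by
    rw [hπ a]
    exact div_nonneg (mul_nonneg (hpos a).le (Real.exp_pos _).le) hZpos.le
  have hπ'nn : ∀ a, 0 ≤ π' a := fun a => by
    rw [hπ' a]
    exact div_nonneg (mul_nonneg (hpos a).le (Real.exp_pos _).le) hZ'pos.le
  have hπsum : ∑ a, π a = 1 := by
    simp only [hπ]
    rw [← Finset.sum_div, div_self hZpos.ne']
  have hπ'sum : ∑ a, π' a = 1 := by
    simp only [hπ']
    rw [← Finset.sum_div, div_self hZ'pos.ne']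
  have hratio1 : ∀ a, π' a ≤ Real.exp (2 * ε / β) * π a := by
    intro a; rw [hπ a, hπ' a]
    exact gibbs_ratio πref r r' β ε hβ hε hpos hcl a
  have hratio2 : ∀ a, π a ≤ Real.exp (2 * ε / β) * π' a := by
    intro a; rw [hπ a, hπ' a]
    exact gibbs_ratio πref r' r β ε hβ hε hpos hcl' a
  have hC : (1:ℝ) ≤ Real.exp (2 * ε / β) := by
    rw [show (1:ℝ) = Real.exp 0 by simp]
    apply Real.exp_le_exp.mpr
    positivity
  have hA := key_exp_diff π π' f _ hC hπnn hπsum hratio1 hf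
  have hB := key_exp_diff π' π f _ hC hπ'nn hπ'sum hratio2 hf
  have habs : |Exp π' f - Exp π f| ≤ Real.exp (2 * ε / β) - 1 := abs_le.mpr ⟨by linarith, hA⟩
  calc |Exp π' f - c| = |(Exp π f - c) + (Exp π' f - Exp π f)| := by ring_nf
    _ ≤ |Exp π f - c| + |Exp π' f - Exp π f| := abs_add_le _ _
    _ ≤ |Exp π f - c| + (Real.exp (2 * ε / β) - 1) := by linarith
end
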